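/- For a countable abelian group A, the group Hom(A, ℤ) equipped with the topology of pointwise convergence (as a subgroup of ℤ^A with the product topology, ℤ discrete) is discrete if and only if Hom(A, ℤ) is a finitely generated abelian group. -/

import Mathlib

/-- For a countable abelian group A, the group Hom(A, ℤ) with the topology of
pointwise convergence (as a subspace of the product ℤ^A, ℤ discrete) is discrete
if and only if Hom(A, ℤ) is finitely generated. -/
theorem stmt_7 {A : Type*} [AddCommGroup A] [Countable A] :
    (∃ U : Set (A → ℤ), IsOpen U ∧ ∀ φ : A →+ ℤ, (⇑φ ∈ U ↔ φ = 0)) ↔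
      AddGroup.FG (A →+ ℤ) := by
  constructor
  · rintro ⟨U, hU, hmem⟩
    have h0 : (fun _ => 0 : A → ℤ) ∈ U := by
      have := (hmem 0).mpr rfl
      exact this
    obtain ⟨I, u, hu, hsub⟩ := (isOpen_pi_iff.mp hU) _ h0
    -- evaluation map into ℤ^I
    let e : (A →+ ℤ) →ₗ[ℤ] (I → ℤ) :=
      { toFun := fun φ i => φ i
        map_add' := fun φ ψ => rfl
        map_smul' := fun n φ => rfl }
    have hinj : Function.Injective e := by
      rw [← LinearMap.ker_eq_bot, LinearMap.ker_eq_bot']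
      intro φ hφ
      apply (hmem φ).mp
      apply hsub
      intro a ha
      have : φ a = 0 := congrFun hφ ⟨a, ha⟩
      rw [this]
      exact (hu a ha).2
    haveI : IsNoetherian ℤ (A →+ ℤ) := isNoetherian_of_injective e hinj
    exact Module.Finite.iff_addGroup_fg.mp inferInstance
  · intro hFG
    haveI : Module.Finite ℤ (A →+ ℤ) := Module.Finite.iff_addGroup_fg.mpr hFG
    haveI : NoZeroSMulDivisors ℤ (A →+ ℤ) := by
      constructor
      intro c φ h
      rcases eq_or_ne c 0 with hc | hc
      · exact Or.inl hc
      · right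
        ext a
        have : c • φ a = 0 := congrArg (fun ψ => ψ a) h
        simpa [hc] using this
    -- evaluation functionals
    let ev : A → ((A →+ ℤ) →ₗ[ℤ] ℤ) := fun a =>
      { toFun := fun φ => φ a
        map_add' := fun φ ψ => rfl
        map_smul' := fun n φ => rfl }
    haveI : IsNoetherian ℤ ((A →+ ℤ) →ₗ[ℤ] ℤ) := inferInstance
    have hWfg : (Submodule.span ℤ (Set.range ev)).FG :=
      IsNoetherian.noetherian _
    have hcomp := (Submodule.fg_iff_compact _).mp hWfg
    obtain ⟨t, ht⟩ := CompleteLattice.IsCompactElement.exists_finset_of_le_iSup _ hcomp (fun a : A => ℤ ∙ ev a)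
      (by rw [← Submodule.span_range_eq_iSup])
    refine ⟨Set.pi ↑t (fun _ => ({0} : Set ℤ)), ?_, ?_⟩
    · exact isOpen_set_pi t.finite_toSet (fun _ _ => isOpen_discrete _)
    · intro φ
      constructor
      · intro hφ
        have key : ∀ a : A, ev a ∈ Submodule.span ℤ (ev '' ↑t) := by
          intro a
          have h1 : ev a ∈ ⨆ b ∈ t, ℤ ∙ ev b :=
            ht (Submodule.subset_span (Set.mem_range_self a))
          have h2 : (⨆ b ∈ t, ℤ ∙ ev b) ≤ Submodule.span ℤ (ev '' ↑t) := by
            refine iSup₂_le fun b hb => ?_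
            rw [Submodule.span_singleton_le_iff_mem]
            exact Submodule.subset_span ⟨b, hb, rfl⟩
          exact h2 h1
        ext a
        have : (ev a) φ = 0 := by
          refine Submodule.span_induction (p := fun f _ => f φ = 0) ?_ ?_ ?_ ?_ (key a)
          · rintro f ⟨b, hb, rfl⟩
            exact hφ b hb
          · simp
          · intro f g _ _ hf hg; simp [hf, hg]
          · intro c f _ hf; simp [hf]
        exact this
      · rintro rfl
        intro a _
        simp
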